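/- arXiv:1104.1242 — 3 statements merged into one kernel-verified Lean document; each statement's English description precedes it below -/
import Mathlib

section
/- Let 0 < α < β < ∞ and C₁ > 0, and let a_m = κ m^{1/α} (ln m)^{−1/α} for some fixed κ > 0. Then ∫_{a_m}^∞ exp(−C₁ (m−1) x^{−α}) x^{−β−1} dx ∼ Γ(β/α) / (α C₁^{β/α}) · m^{−β/α} as m → ∞, where Γ denotes Euler's gamma function. -/
open MeasureTheory Filter Set Asymptotics
open scoped Topology

/-!
The substitution `u = c x^(-α)` with `c = C₁ (m - 1)` turns the integral into
`c^(-β/α) / α · γ(β/α, c a_m^(-α))`, where `γ(s, T) = ∫₀^T e^(-u) u^(s-1) du` is the lower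
incomplete gamma function. Since `c a_m^(-α) = C₁ κ^(-α) (1 - 1/m) ln m → ∞`, the incomplete
gamma factor tends to `Γ(β/α)`, while `(m - 1)^(-β/α) ∼ m^(-β/α)`.
-/

noncomputable def lowerIncompleteGamma (s T : ℝ) : ℝ :=
  ∫ u in Ioo 0 T, Real.exp (-u) * u ^ (s - 1)

theorem tendsto_lowerIncompleteGamma_atTop {s : ℝ} (hs : 0 < s) :
    Tendsto (lowerIncompleteGamma s) atTop (𝓝 (Real.Gamma s)) := by
  rw [Real.Gamma_eq_integral hs]
  refine (intervalIntegral_tendsto_integral_Ioi 0 (Real.GammaIntegral_convergent hs)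
    tendsto_id).congr' ?_
  filter_upwards [eventually_ge_atTop 0] with T hT
  rw [id, intervalIntegral.integral_of_le hT, integral_Ioc_eq_integral_Ioo]
  rfl

section ChangeOfVariables

variable {α c A : ℝ}

theorem image_const_mul_rpow_neg_Ioi (hα : 0 < α) (hc : 0 < c) (hA : 0 < A) :
    (fun x : ℝ => c * x ^ (-α)) '' Ioi A = Ioo 0 (c * A ^ (-α)) := by
  ext u
  constructor
  · rintro ⟨x, hx, rfl⟩
    have hx0 : 0 < x := hA.trans hx
    exact ⟨by positivity,
      mul_lt_mul_of_pos_left (Real.rpow_lt_rpow_of_neg hA hx (neg_neg_of_pos hα)) hc⟩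
  · rintro ⟨hu, huT⟩
    refine ⟨(u / c) ^ (-α⁻¹), ?_, ?_⟩
    · have hA' : (A ^ (-α)) ^ (-α⁻¹) = A := by
        rw [← Real.rpow_mul hA.le, neg_mul_neg, mul_inv_cancel₀ hα.ne', Real.rpow_one]
      rw [mem_Ioi, ← hA']
      exact Real.rpow_lt_rpow_of_neg (by positivity) ((div_lt_iff₀' hc).2 huT)
        (neg_neg_of_pos (inv_pos.2 hα))
    · change c * ((u / c) ^ (-α⁻¹)) ^ (-α) = u
      rw [← Real.rpow_mul (by positivity), neg_mul_neg, inv_mul_cancel₀ hα.ne', Real.rpow_one,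
        mul_div_cancel₀ _ hc.ne']

theorem integral_Ioi_exp_neg_mul_rpow_neg (hα : 0 < α) (hc : 0 < c) (hA : 0 < A) (β : ℝ) :
    ∫ x in Ioi A, Real.exp (-(c * x ^ (-α))) * x ^ (-β - 1) =
      c ^ (-(β / α)) / α * lowerIncompleteGamma (β / α) (c * A ^ (-α)) := by
  have hderiv : ∀ x ∈ Ioi A, HasDerivWithinAt (fun x : ℝ => c * x ^ (-α))
      (c * (-α * x ^ (-α - 1))) (Ioi A) x := fun x hx =>
    ((Real.hasDerivAt_rpow_const (Or.inl (hA.trans hx).ne')).const_mul c).hasDerivWithinAt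
  have hinj : InjOn (fun x : ℝ => c * x ^ (-α)) (Ioi A) := fun x hx y hy hxy =>
    Real.rpow_left_injOn (neg_ne_zero.2 hα.ne') (hA.trans hx).le (hA.trans hy).le
      (mul_left_cancel₀ hc.ne' hxy)
  rw [lowerIncompleteGamma, ← image_const_mul_rpow_neg_Ioi hα hc hA,
    integral_image_eq_integral_abs_deriv_smul measurableSet_Ioi hderiv hinj,
    ← integral_const_mul]
  refine setIntegral_congr_fun measurableSet_Ioi fun x hx => ?_
  have hx0 : 0 < x := hA.trans hx
  have hc_pow : c ^ (-(β / α)) * c * c ^ (β / α - 1) = 1 := by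
    rw [mul_assoc, Real.rpow_sub_one hc.ne', mul_div_cancel₀ _ hc.ne', ← Real.rpow_add hc,
      neg_add_cancel, Real.rpow_zero]
  have hx_pow : x ^ (-α - 1) * x ^ (-α * (β / α - 1)) = x ^ (-β - 1) := by
    rw [← Real.rpow_add hx0]
    congr 1
    field_simp
    ring
  rw [smul_eq_mul, abs_mul, abs_mul, abs_neg, abs_of_pos hc, abs_of_pos hα,
    abs_of_pos (by positivity : 0 < x ^ (-α - 1)), Real.mul_rpow hc.le (by positivity),
    ← Real.rpow_mul hx0.le, ← hx_pow, div_mul_eq_mul_div, eq_div_iff hα.ne']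
  linear_combination (-(α * Real.exp (-(c * x ^ (-α))) * x ^ (-α - 1) *
    x ^ (-α * (β / α - 1)))) * hc_pow

end ChangeOfVariables

theorem isEquivalent_natCast_sub_rpow (c r : ℝ) :
    (fun m : ℕ => ((m : ℝ) - c) ^ r) ~[atTop] fun m : ℕ => (m : ℝ) ^ r := by
  have h : (fun m : ℕ => (m : ℝ) + -c) ~[atTop] fun m : ℕ => (m : ℝ) :=
    IsEquivalent.refl.add_const_of_norm_tendsto_atTop
      (tendsto_norm_atTop_atTop.comp tendsto_natCast_atTop_atTop)
  simp only [sub_eq_add_neg]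
  exact h.rpow (fun m => Nat.cast_nonneg m)

theorem rpow_neg_mul_rpow_one_div_mul_rpow_neg_one_div {α κ x y : ℝ} (hα : α ≠ 0)
    (hκ : 0 ≤ κ) (hx : 0 ≤ x) (hy : 0 ≤ y) :
    (κ * x ^ (1 / α) * y ^ (-(1 / α))) ^ (-α) = κ ^ (-α) * x⁻¹ * y := by
  rw [Real.mul_rpow (by positivity) (by positivity), Real.mul_rpow hκ (by positivity),
    ← Real.rpow_mul hx, ← Real.rpow_mul hy, one_div, mul_neg, inv_mul_cancel₀ hα, neg_mul_neg,
    inv_mul_cancel₀ hα, Real.rpow_neg_one, Real.rpow_one]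

theorem tendsto_mul_sub_one_mul_rpow_neg_atTop {C₁ α κ : ℝ} (hα : 0 < α) (hC₁ : 0 < C₁)
    (hκ : 0 < κ) :
    Tendsto (fun m : ℕ => C₁ * ((m : ℝ) - 1) *
      (κ * (m : ℝ) ^ (1 / α) * Real.log m ^ (-(1 / α))) ^ (-α)) atTop atTop := by
  have hlog : Tendsto (fun m : ℕ => C₁ * κ ^ (-α) / 2 * Real.log m) atTop atTop :=
    (Real.tendsto_log_atTop.comp tendsto_natCast_atTop_atTop).const_mul_atTop (by positivity)
  refine tendsto_atTop_mono' atTop ?_ hlog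
  filter_upwards [eventually_ge_atTop 2] with m hm
  have hm : (2 : ℝ) ≤ m := by exact_mod_cast hm
  have hlog_pos : 0 < Real.log m := Real.log_pos (by linarith)
  rw [rpow_neg_mul_rpow_one_div_mul_rpow_neg_one_div hα.ne' hκ.le (by positivity) hlog_pos.le]
  have hhalf : 1 / 2 ≤ ((m : ℝ) - 1) * (m : ℝ)⁻¹ := by
    rw [← div_eq_mul_inv, le_div_iff₀ (by positivity)]
    linarith
  calc C₁ * κ ^ (-α) / 2 * Real.log m = C₁ * κ ^ (-α) * (1 / 2) * Real.log m := by ring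
    _ ≤ C₁ * κ ^ (-α) * (((m : ℝ) - 1) * (m : ℝ)⁻¹) * Real.log m := by gcongr
    _ = _ := by ring

/-- **A gamma-integral asymptotic.** For `0 < α < β < ∞`, `C₁ > 0`, `κ > 0` and
`a_m = κ m^(1/α)(ln m)^(-1/α)`, one has
`∫_{a_m}^∞ exp(-C₁(m-1)x^(-α)) x^(-β-1) dx ∼ Γ(β/α)/(α C₁^(β/α)) · m^(-β/α)`
as `m → ∞`, where `Γ` is Euler's gamma function. -/
theorem exp_integral_asymptotics
    (C₁ α β : ℝ) (hα : 0 < α) (hαβ : α < β) (hC₁ : 0 < C₁)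
    (κ : ℝ) (hκ : 0 < κ)
    (a : ℕ → ℝ)
    (ha : ∀ m : ℕ, a m = κ * (m : ℝ) ^ (1 / α) * (Real.log m) ^ (-(1 / α))) :
    (fun m : ℕ =>
        ∫ x in Set.Ioi (a m), Real.exp (-C₁ * ((m : ℝ) - 1) * x ^ (-α)) * x ^ (-β - 1))
      ~[atTop] fun m : ℕ =>
        Real.Gamma (β / α) / (α * C₁ ^ (β / α)) * (m : ℝ) ^ (-(β / α)) := by
  have hγ : 0 < β / α := div_pos (hα.trans hαβ) hα
  have hgamma : (fun m : ℕ => lowerIncompleteGamma (β / α) (C₁ * ((m : ℝ) - 1) * a m ^ (-α)))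
      ~[atTop] fun _ => Real.Gamma (β / α) :=
    (isEquivalent_const_iff_tendsto (Real.Gamma_pos_of_pos hγ).ne').2 <|
      (tendsto_lowerIncompleteGamma_atTop hγ).comp <| by
        simpa only [ha] using tendsto_mul_sub_one_mul_rpow_neg_atTop hα hC₁ hκ
  refine ((((IsEquivalent.refl (u := fun _ : ℕ => C₁ ^ (-(β / α)) / α)).mul
    (isEquivalent_natCast_sub_rpow 1 (-(β / α)))).mul hgamma).congr_left ?_).congr_right ?_
  · filter_upwards [eventually_ge_atTop 2] with m hm
    have hm : (2 : ℝ) ≤ m := by exact_mod_cast hm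
    have ham : 0 < a m := by
      have := Real.log_pos (by linarith : (1 : ℝ) < m)
      rw [ha]
      positivity
    simp only [Pi.mul_apply, neg_mul]
    rw [integral_Ioi_exp_neg_mul_rpow_neg hα (mul_pos hC₁ (by linarith)) ham,
      Real.mul_rpow hC₁.le (by linarith)]
    ring
  · refine Eventually.of_forall fun m => ?_
    simp only [Pi.mul_apply]
    rw [Real.rpow_neg hC₁.le]
    ring
end

section
/- Let 0 < α < β < ∞, C₁ > 0, C₂ ∈ ℝ, and F̃(x) = 1 − C₁x^{−α} − C₂x^{−β}. There exists a constant C > 0 such that for all sufficiently large m and all x ≥ a_m = κ m^{1/α}(ln m)^{−1/α} (with fixed 0 < κ < (C₁/ζ)^{1/α}, ζ = (β−α)/α), the difference Δ_m(x) = F̃^m(x) − exp(−C₁ m x^{−α}) satisfies |Δ_m(x)| ≤ C m x^{−min(2α, β)} exp(−C₁ m x^{−α}). -/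
open Filter Real
open scoped Topology

/-!
Write `F̃(x) = (1 + δ(x)) exp(-C₁ x^(-α))`. Expanding `exp` to second order gives
`|δ(x)| ≤ K x^(-γ)` with `γ = min(2α, β) > α`, and `|(1 + δ)^m - 1| ≤ e m |δ|` as soon as
`m |δ| ≤ 1`. For `x ≥ a_m` this holds for large `m`, because
`m a_m^(-γ) = κ^(-γ) (log m)^(γ/α) / m^(γ/α - 1) → 0`.
-/

lemma abs_one_sub_mul_exp_sub_one_le_sq {u : ℝ} (hu₀ : 0 ≤ u) (hu₁ : u ≤ 1) :
    |(1 - u) * exp u - 1| ≤ u ^ 2 := by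
  have h_neg : 1 - u ≤ exp (-u) := by linarith [add_one_le_exp (-u)]
  have h_pos : u + 1 ≤ exp u := add_one_le_exp u
  have h_inv : exp (-u) * exp u = 1 := by rw [← exp_add, neg_add_cancel, exp_zero]
  rw [abs_le]
  constructor <;> nlinarith [exp_pos u]

lemma abs_one_add_pow_sub_one_le {δ : ℝ} {m : ℕ} (hm : m * |δ| ≤ 1) :
    |(1 + δ) ^ m - 1| ≤ exp 1 * (m * |δ|) := by
  have h_base : max |1 + δ| |1| ≤ exp |δ| := by
    rw [abs_one]
    refine max_le ((abs_add_le 1 δ).trans ?_) (one_le_exp (abs_nonneg δ))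
    rw [abs_one, add_comm]
    exact add_one_le_exp _
  have h_pow : max |1 + δ| |1| ^ (m - 1) ≤ exp 1 :=
    calc max |1 + δ| |1| ^ (m - 1) ≤ exp |δ| ^ (m - 1) := by gcongr
      _ = exp ((m - 1 : ℕ) * |δ|) := (exp_nat_mul _ _).symm
      _ ≤ exp 1 := by
        gcongr
        exact (mul_le_mul_of_nonneg_right (by exact_mod_cast m.sub_le 1) (abs_nonneg δ)).trans hm
  calc |(1 + δ) ^ m - 1| = |(1 + δ) ^ m - 1 ^ m| := by rw [one_pow]
    _ ≤ |1 + δ - 1| * m * max |1 + δ| |1| ^ (m - 1) := abs_pow_sub_pow_le _ _ _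
    _ ≤ |δ| * m * exp 1 := by
      rw [add_sub_cancel_left]
      gcongr
    _ = exp 1 * (m * |δ|) := by ring

lemma abs_pow_sub_exp_neg_le {y u ε : ℝ} {m : ℕ} (h : |y * exp u - 1| ≤ ε) (hm : m * ε ≤ 1) :
    |y ^ m - exp (-(m * u))| ≤ exp 1 * (m * ε) * exp (-(m * u)) := by
  set δ := y * exp u - 1
  have hy : y = (1 + δ) * exp (-u) := by
    rw [exp_neg]; field_simp; ring
  have hy_pow : y ^ m - exp (-(m * u)) = ((1 + δ) ^ m - 1) * exp (-(m * u)) := by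
    rw [hy, mul_pow, ← exp_nat_mul, mul_neg]; ring
  have hmδ : m * |δ| ≤ 1 := (mul_le_mul_of_nonneg_left h m.cast_nonneg).trans hm
  rw [hy_pow, abs_mul, abs_of_pos (exp_pos _)]
  gcongr
  exact (abs_one_add_pow_sub_one_le hmδ).trans (by gcongr)

lemma mul_rpow_neg_le_one {C α x : ℝ} (hα : 0 < α) (hC : 0 ≤ C) (hx : C ^ (1 / α) ≤ x) :
    C * x ^ (-α) ≤ 1 := by
  have hx₀ : 0 ≤ x := (rpow_nonneg hC _).trans hx
  rw [rpow_neg hx₀, ← div_eq_mul_inv]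
  rw [one_div, rpow_inv_le_iff_of_pos hC hx₀ hα] at hx
  exact div_le_one_of_le₀ hx (rpow_nonneg hx₀ _)

lemma abs_one_sub_sub_mul_exp_sub_one_le {C₁ C₂ α β x : ℝ} (hC₁ : 0 ≤ C₁) (hx : 1 ≤ x)
    (hu : C₁ * x ^ (-α) ≤ 1) :
    |(1 - C₁ * x ^ (-α) - C₂ * x ^ (-β)) * exp (C₁ * x ^ (-α)) - 1|
      ≤ (C₁ ^ 2 + exp 1 * |C₂|) * x ^ (-min (2 * α) β) := by
  set u := C₁ * x ^ (-α)
  have hx₀ : 0 < x := one_pos.trans_le hx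
  have hu₀ : 0 ≤ u := by positivity
  have hu_sq : u ^ 2 = C₁ ^ 2 * x ^ (-(2 * α)) := by
    rw [show -(2 * α) = -α + -α by ring, rpow_add hx₀]; ring
  have h2α : x ^ (-(2 * α)) ≤ x ^ (-min (2 * α) β) :=
    rpow_le_rpow_of_exponent_le hx (neg_le_neg (min_le_left _ _))
  have hβ : x ^ (-β) ≤ x ^ (-min (2 * α) β) :=
    rpow_le_rpow_of_exponent_le hx (neg_le_neg (min_le_right _ _))
  have h_main : |(1 - u) * exp u - 1| ≤ C₁ ^ 2 * x ^ (-min (2 * α) β) :=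
    (abs_one_sub_mul_exp_sub_one_le_sq hu₀ hu).trans (hu_sq ▸ by gcongr)
  have h_corr : |C₂ * x ^ (-β) * exp u| ≤ exp 1 * |C₂| * x ^ (-min (2 * α) β) := by
    rw [abs_mul, abs_mul, abs_of_nonneg (rpow_nonneg hx₀.le _), abs_of_pos (exp_pos u)]
    have : exp u ≤ exp 1 := exp_le_exp.mpr hu
    calc |C₂| * x ^ (-β) * exp u ≤ |C₂| * x ^ (-min (2 * α) β) * exp 1 := by gcongr
      _ = _ := by ring
  calc |(1 - u - C₂ * x ^ (-β)) * exp u - 1|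
      = |((1 - u) * exp u - 1) - C₂ * x ^ (-β) * exp u| := by ring_nf
    _ ≤ |(1 - u) * exp u - 1| + |C₂ * x ^ (-β) * exp u| := abs_sub _ _
    _ ≤ _ := by linarith

lemma rpow_mul_log_rpow_neg_eq {x p : ℝ} (hx : 1 < x) :
    x ^ p * log x ^ (-p) = (x / log x) ^ p := by
  have hlog : 0 < log x := log_pos hx
  rw [div_rpow (by linarith) hlog.le, rpow_neg hlog.le, div_eq_mul_inv]

lemma tendsto_div_log_atTop : Tendsto (fun x : ℝ => x / log x) atTop atTop := by
  have h_pos : ∀ᶠ x : ℝ in atTop, 0 < log x / x := by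
    filter_upwards [eventually_gt_atTop 1] with x hx
    exact div_pos (log_pos hx) (by linarith)
  have h_zero := isLittleO_log_id_atTop.tendsto_div_nhds_zero
  refine (tendsto_nhdsWithin_iff.mpr ⟨h_zero, h_pos⟩).inv_tendsto_nhdsGT_zero.congr fun x => ?_
  simp [inv_div]

lemma tendsto_mul_rpow_mul_log_rpow_atTop {κ α : ℝ} (hκ : 0 < κ) (hα : 0 < α) :
    Tendsto (fun x : ℝ => κ * x ^ (1 / α) * log x ^ (-(1 / α))) atTop atTop := by
  refine (((tendsto_rpow_atTop (one_div_pos.mpr hα)).comp tendsto_div_log_atTop).const_mul_atTop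
    hκ).congr' ?_
  filter_upwards [eventually_gt_atTop 1] with x hx
  rw [mul_assoc, rpow_mul_log_rpow_neg_eq hx]
  rfl

lemma tendsto_mul_mul_rpow_mul_log_rpow_neg_nhds_zero {κ α γ : ℝ} (hκ : 0 ≤ κ) (hα : 0 < α)
    (hαγ : α < γ) :
    Tendsto (fun x : ℝ => x * (κ * x ^ (1 / α) * log x ^ (-(1 / α))) ^ (-γ)) atTop (𝓝 0) := by
  have h_lo : (fun x : ℝ => log x ^ (γ / α)) =o[atTop] (fun x => x ^ (γ / α - 1)) :=
    isLittleO_log_rpow_rpow_atTop _ (by rw [sub_pos, one_lt_div hα]; exact hαγ)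
  have h_lim : Tendsto (fun x : ℝ => κ ^ (-γ) * (log x ^ (γ / α) / x ^ (γ / α - 1))) atTop
      (𝓝 0) := by
    simpa using h_lo.tendsto_div_nhds_zero.const_mul (κ ^ (-γ))
  refine h_lim.congr' ?_
  filter_upwards [eventually_gt_atTop 1] with x hx
  have hx₀ : 0 < x := one_pos.trans hx
  have hlog : 0 < log x := log_pos hx
  have h_div : 0 ≤ x / log x := by positivity
  rw [mul_assoc, rpow_mul_log_rpow_neg_eq hx, mul_rpow hκ (by positivity), ← rpow_mul h_div,
    show 1 / α * -γ = -(γ / α) by ring, rpow_neg h_div, ← inv_rpow h_div, inv_div,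
    div_rpow hlog.le hx₀.le, rpow_sub hx₀, rpow_one]
  field_simp

theorem exp_approximation_pointwise_bound_general
    (C₁ C₂ α β : ℝ) (hα : 0 < α) (hαβ : α < β) (hC₁ : 0 < C₁)
    (Ftilde : ℝ → ℝ)
    (hFt : ∀ x : ℝ, Ftilde x = 1 - C₁ * x ^ (-α) - C₂ * x ^ (-β))
    (κ : ℝ) (hκ : 0 < κ)
    (a : ℕ → ℝ)
    (ha : ∀ m : ℕ, a m = κ * (m : ℝ) ^ (1 / α) * (Real.log m) ^ (-(1 / α))) :
    ∃ C : ℝ, 0 < C ∧ ∀ᶠ m : ℕ in atTop, ∀ x : ℝ, a m ≤ x →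
      |(Ftilde x) ^ m - Real.exp (-C₁ * (m : ℝ) * x ^ (-α))|
        ≤ C * (m : ℝ) * x ^ (-(min (2 * α) β)) * Real.exp (-C₁ * (m : ℝ) * x ^ (-α)) := by
  set γ := min (2 * α) β
  set K := C₁ ^ 2 + exp 1 * |C₂|
  have hαγ : α < γ := lt_min (by linarith) hαβ
  have h_large : Tendsto a atTop atTop :=
    ((tendsto_mul_rpow_mul_log_rpow_atTop hκ hα).comp tendsto_natCast_atTop_atTop).congr
      fun m => (ha m).symm
  have h_small : Tendsto (fun m : ℕ => m * a m ^ (-γ)) atTop (𝓝 0) :=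
    ((tendsto_mul_mul_rpow_mul_log_rpow_neg_nhds_zero hκ.le hα hαγ).comp
      tendsto_natCast_atTop_atTop).congr fun m => by simp [ha m]
  refine ⟨exp 1 * K, by positivity, ?_⟩
  filter_upwards [h_large.eventually_ge_atTop (max 1 (C₁ ^ (1 / α))),
    (h_small.const_mul K).eventually (ge_mem_nhds (by norm_num : K * 0 < 1))]
    with m ham hmK x hx
  have hx₁ : 1 ≤ x := (le_max_left _ _).trans (ham.trans hx)
  have hu : C₁ * x ^ (-α) ≤ 1 :=
    mul_rpow_neg_le_one hα hC₁.le ((le_max_right _ _).trans (ham.trans hx))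
  have hmε : m * (K * x ^ (-γ)) ≤ 1 := by
    have hx_γ : x ^ (-γ) ≤ a m ^ (-γ) :=
      rpow_le_rpow_of_nonpos (one_pos.trans_le ((le_max_left _ _).trans ham)) hx
        (by linarith)
    calc m * (K * x ^ (-γ)) ≤ K * (m * a m ^ (-γ)) := by rw [mul_left_comm]; gcongr
      _ ≤ 1 := hmK
  have h := abs_pow_sub_exp_neg_le (abs_one_sub_sub_mul_exp_sub_one_le hC₁.le hx₁ hu) hmε
  rw [hFt, show -C₁ * m * x ^ (-α) = -(m * (C₁ * x ^ (-α))) by ring]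
  exact h.trans_eq (by ring)

/-- **Pointwise bound for the exponential approximation.** With
`F̃(x) = 1 - C₁x^(-α) - C₂x^(-β)`, `0 < α < β < ∞`, `C₁ > 0`, `ζ = (β-α)/α`,
`a_m = κ m^(1/α)(ln m)^(-1/α)` and `0 < κ < (C₁/ζ)^(1/α)`, there is a constant `C > 0`
such that for all sufficiently large `m` and all `x ≥ a_m`, the difference
`Δ_m(x) = F̃^m(x) - exp(-C₁ m x^(-α))` satisfies
`|Δ_m(x)| ≤ C m x^(-min(2α, β)) exp(-C₁ m x^(-α))`. -/
theorem exp_approximation_pointwise_bound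
    (C₁ C₂ α β : ℝ) (hα : 0 < α) (hαβ : α < β) (hC₁ : 0 < C₁)
    (Ftilde : ℝ → ℝ)
    (hFt : ∀ x : ℝ, Ftilde x = 1 - C₁ * x ^ (-α) - C₂ * x ^ (-β))
    (ζ : ℝ) (hζ : ζ = (β - α) / α)
    (κ : ℝ) (hκ : 0 < κ) (hκ' : κ < (C₁ / ζ) ^ (1 / α))
    (a : ℕ → ℝ)
    (ha : ∀ m : ℕ, a m = κ * (m : ℝ) ^ (1 / α) * (Real.log m) ^ (-(1 / α))) :
    ∃ C : ℝ, 0 < C ∧ ∀ᶠ m : ℕ in atTop, ∀ x : ℝ, a m ≤ x →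
      |(Ftilde x) ^ m - Real.exp (-C₁ * (m : ℝ) * x ^ (-α))|
        ≤ C * (m : ℝ) * x ^ (-(min (2 * α) β)) * Real.exp (-C₁ * (m : ℝ) * x ^ (-α)) :=
  exp_approximation_pointwise_bound_general C₁ C₂ α β hα hαβ hC₁ Ftilde hFt κ hκ a ha
end

section
/- For all real α, β with 0 < α < β, setting ζ = (β−α)/α, the quantity RMMSE(4) = ( η(α,β) (1+ζ)² Γ²(2+ζ) / 2^{2ζ} )^{1/(1+2ζ)} is strictly greater than 1, where η(α,β) = ( β(α+1) / (α(β+1)) )² · ( (α+1)² / (α(α+2)) )^{2ζ} and Γ is Euler's gamma function; this follows in particular from the inequality (α+1)⁶ − 4α³(α+2) > 0 valid for all α > 0. -/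
/-!
With `A = β(α+1)/(α(β+1))` and `g = (α+1)²/(α(α+2))`, the base of the outer power is the square
of `A · g^ζ · (1+ζ)Γ(2+ζ)/2^ζ`. Here `A > 1` because `β > α`, `g > 1` because
`(α+1)² > α(α+2)`, and `2^ζ ≤ (1+ζ)Γ(2+ζ)` for `ζ ≥ 0`: on `[0,1]` by Bernoulli's inequality
`2^ζ ≤ 1+ζ` together with `Γ ≥ 1` on `[2,∞)`, and for `ζ > 1` already `2^ζ ≤ Γ(2+ζ)` by
log-convexity of `Γ`, since `Γ(2) = 1` and `Γ(3) = 2`.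
-/

namespace Real

lemma one_le_Gamma_of_two_le {x : ℝ} (hx : 2 ≤ x) : 1 ≤ Gamma x :=
  Gamma_two ▸ Gamma_strictMonoOn_Ici.monotoneOn Set.self_mem_Ici hx hx

/-- Log-convexity of `Γ` through the points `2 < 3 < 2 + ζ`. -/
lemma two_rpow_le_Gamma_two_add {ζ : ℝ} (hζ : 1 < ζ) : 2 ^ ζ ≤ Gamma (2 + ζ) := by
  have hζ0 : 0 < ζ := one_pos.trans hζ
  have hconv : Gamma 3 ≤ Gamma 2 ^ ((ζ - 1) / ζ) * Gamma (2 + ζ) ^ (1 / ζ) := by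
    have h3 : ((ζ - 1) / ζ) * 2 + (1 / ζ) * (2 + ζ) = 3 := by field_simp; ring
    rw [← h3]
    exact Gamma_mul_add_mul_le_rpow_Gamma_mul_rpow_Gamma two_pos (by positivity)
      (div_pos (by linarith) hζ0) (by positivity) (by field_simp; ring)
  have hGamma3 : Gamma 3 = 2 := by simp [Gamma_ofNat_eq_factorial]
  rw [hGamma3, Gamma_two, one_rpow, one_mul] at hconv
  calc (2 : ℝ) ^ ζ ≤ (Gamma (2 + ζ) ^ (1 / ζ)) ^ ζ := by gcongr
    _ = Gamma (2 + ζ) := by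
      rw [← rpow_mul (Gamma_pos_of_pos (by linarith)).le, one_div_mul_cancel hζ0.ne', rpow_one]

lemma two_rpow_le_one_add_mul_Gamma_two_add {ζ : ℝ} (hζ : 0 ≤ ζ) :
    2 ^ ζ ≤ (1 + ζ) * Gamma (2 + ζ) := by
  rcases le_or_gt ζ 1 with hle | hlt
  · have hbernoulli : (2 : ℝ) ^ ζ ≤ 1 + ζ := by
      simpa [one_add_one_eq_two] using
        rpow_one_add_le_one_add_mul_self (s := 1) (by norm_num) hζ hle
    have hGamma := one_le_Gamma_of_two_le (by linarith : (2 : ℝ) ≤ 2 + ζ)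
    nlinarith
  · calc (2 : ℝ) ^ ζ ≤ Gamma (2 + ζ) := two_rpow_le_Gamma_two_add hlt
      _ ≤ (1 + ζ) * Gamma (2 + ζ) :=
        le_mul_of_one_le_left (Gamma_pos_of_pos (by linarith)).le (by linarith)

end Real

lemma one_lt_mul_add_one_div_mul_add_one {α β : ℝ} (hα : 0 < α) (hαβ : α < β) :
    1 < β * (α + 1) / (α * (β + 1)) := by
  rw [one_lt_div (by nlinarith)]
  linarith

lemma one_lt_add_one_sq_div_mul_add_two {α : ℝ} (hα : 0 < α) :
    1 < (α + 1) ^ 2 / (α * (α + 2)) := by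
  rw [one_lt_div (by positivity)]
  linarith

lemma sq_mul_rpow_two_mul_div_two_rpow_two_mul {A g ζ c : ℝ} (hg : 0 ≤ g) :
    A ^ 2 * g ^ (2 * ζ) * c ^ 2 / 2 ^ (2 * ζ) = (A * g ^ ζ * (c / 2 ^ ζ)) ^ 2 := by
  have hsq {x : ℝ} (hx : 0 ≤ x) : x ^ (2 * ζ) = (x ^ ζ) ^ 2 := by
    rw [mul_comm, ← Real.rpow_mul_natCast hx, Nat.cast_ofNat]
  rw [hsq hg, hsq zero_le_two]
  ring

/-- **The de Vries estimator dominates the DPR estimator.** For all `0 < α < β`, with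
`ζ = (β-α)/α` and `η(α,β) = (β(α+1)/(α(β+1)))² ((α+1)²/(α(α+2)))^(2ζ)`, the ratio of
minimal mean square errors `RMMSE(4) = (η(α,β)(1+ζ)² Γ²(2+ζ)/2^(2ζ))^(1/(1+2ζ))` is
strictly greater than `1`; this follows in particular from the inequality
`(α+1)⁶ - 4α³(α+2) > 0`, valid for all `α > 0`. -/
theorem rmmse_deVries_gt_one
    (α β : ℝ) (hα : 0 < α) (hαβ : α < β)
    (ζ η : ℝ) (hζ : ζ = (β - α) / α)
    (hη : η = (β * (α + 1) / (α * (β + 1))) ^ 2 *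
      ((α + 1) ^ 2 / (α * (α + 2))) ^ (2 * ζ)) :
    1 < (η * (1 + ζ) ^ 2 * (Real.Gamma (2 + ζ)) ^ 2 / 2 ^ (2 * ζ)) ^ (1 / (1 + 2 * ζ)) ∧
      ∀ a : ℝ, 0 < a → 0 < (a + 1) ^ 6 - 4 * a ^ 3 * (a + 2) := by
  refine ⟨?_, fun a ha => ?_⟩
  · have hζ0 : 0 ≤ ζ := hζ ▸ div_nonneg (by linarith) hα.le
    have hGamma : 1 ≤ (1 + ζ) * Real.Gamma (2 + ζ) / 2 ^ ζ :=
      (one_le_div (by positivity)).2 (Real.two_rpow_le_one_add_mul_Gamma_two_add hζ0)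
    have hbase := one_lt_mul_of_lt_of_le
      (one_lt_mul_of_lt_of_le (one_lt_mul_add_one_div_mul_add_one hα hαβ)
        (Real.one_le_rpow (one_lt_add_one_sq_div_mul_add_two hα).le hζ0)) hGamma
    rw [hη, mul_assoc _ ((1 + ζ) ^ 2), ← mul_pow,
      sq_mul_rpow_two_mul_div_two_rpow_two_mul (by positivity)]
    exact Real.one_lt_rpow (one_lt_pow₀ hbase two_ne_zero) (by positivity)
  · have hexpand : (a + 1) ^ 6 - 4 * a ^ 3 * (a + 2) =
        a ^ 6 + 6 * a ^ 5 + 11 * a ^ 4 + 12 * a ^ 3 + 15 * a ^ 2 + 6 * a + 1 := by ring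
    rw [hexpand]
    positivity
end
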